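/- Let f : ℝ → ℝ be continuous and rapidly decreasing. For every ε > 0 there exists a constant C = C(ε, f) > 0 such that for all real D ≥ 1 and T > 1, the sum S = Σ_{(c,d): D ≤ c ≤ 2D, 1 ≤ d ≤ D, gcd(c,d)=1} Σ_{m∈ℤ} f(T(d²/(4c) + m)) satisfies |S| ≤ C · D^{2+ε} / T. -/

import Mathlib

/-- Divisor bound: for every `δ > 0` there is `C ≥ 1` with `τ(n) ≤ C n^δ`. -/
lemma tau_le_rpow (δ : ℝ) (hδ : 0 < δ) :
    ∃ C : ℝ, 1 ≤ C ∧ ∀ n : ℕ, 1 ≤ n → (n.divisors.card : ℝ) ≤ C * (n : ℝ) ^ δ := by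
  set K : ℝ := 1 + 2/δ with hK
  have hK1 : (1:ℝ) ≤ K := by
    rw [hK]
    have : 0 < 2/δ := by positivity
    linarith
  set P : ℕ := ⌈(2:ℝ) ^ (1/δ)⌉₊ with hP
  refine ⟨K ^ P, one_le_pow₀ hK1, ?_⟩
  intro n hn
  have hn0 : n ≠ 0 := by omega
  -- key pointwise bound: for a prime p and exponent a
  have hsmall : ∀ p a : ℕ, 2 ≤ p → ((a:ℝ) + 1) ≤ K * ((p:ℝ)^a) ^ δ := by
    intro p a hp
    have hp1 : (1:ℝ) < p := by exact_mod_cast hp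
    have h2p : ((2:ℝ)^a) ^ δ ≤ ((p:ℝ)^a) ^ δ := by
      apply Real.rpow_le_rpow (by positivity)
        (pow_le_pow_left₀ (by norm_num) (by exact_mod_cast hp) a) hδ.le
    have hlog : (0.6931471803 : ℝ) < Real.log 2 := Real.log_two_gt_d9
    have h2a : (1 : ℝ) + (a:ℝ) * δ * Real.log 2 ≤ ((2:ℝ)^a) ^ δ := by
      have : ((2:ℝ)^a) ^ δ = Real.exp ((a:ℝ) * δ * Real.log 2) := by
        rw [← Real.rpow_natCast 2 a, ← Real.rpow_mul (by norm_num),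
          Real.rpow_def_of_pos (by norm_num)]
        ring_nf
      rw [this]
      linarith [Real.add_one_le_exp ((a:ℝ) * δ * Real.log 2)]
    have ha0 : (0:ℝ) ≤ a := Nat.cast_nonneg a
    have hKd : (1:ℝ) ≤ K * δ * Real.log 2 := by
      rw [hK]
      have he : (1+2/δ) * δ = δ + 2 := by field_simp
      have h2 : (0.5:ℝ) ≤ Real.log 2 := by linarith
      calc (1:ℝ) = 2 * 0.5 := by norm_num
        _ ≤ (δ + 2) * Real.log 2 := by nlinarith [mul_nonneg hδ.le (le_trans (by norm_num : (0:ℝ) ≤ 0.5) h2)]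
        _ = (1+2/δ) * δ * Real.log 2 := by rw [he]
    have key : ((a:ℝ) + 1) ≤ K * (1 + (a:ℝ) * δ * Real.log 2) := by
      have hexp : K * (1 + (a:ℝ) * δ * Real.log 2) = K + (a:ℝ) * (K * δ * Real.log 2) := by ring
      rw [hexp]
      have := mul_le_mul_of_nonneg_left hKd ha0
      rw [mul_one] at this
      linarith
    calc ((a:ℝ) + 1) ≤ K * (1 + (a:ℝ) * δ * Real.log 2) := key
      _ ≤ K * (((2:ℝ)^a) ^ δ) := by
          apply mul_le_mul_of_nonneg_left h2a (by linarith)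
      _ ≤ K * (((p:ℝ)^a) ^ δ) := by
          apply mul_le_mul_of_nonneg_left h2p (by linarith)
  have hbig : ∀ p a : ℕ, p.Prime → P ≤ p → ((a:ℝ) + 1) ≤ ((p:ℝ)^a) ^ δ := by
    intro p a hp hPp
    have hp2 : (2:ℝ) ^ ((1:ℝ)/δ) ≤ (p:ℝ) := le_trans (Nat.le_ceil _) (by exact_mod_cast hPp)
    have h2 : (2:ℝ) ≤ (p:ℝ) ^ δ := by
      have := Real.rpow_le_rpow (by positivity) hp2 hδ.le
      rwa [← Real.rpow_mul (by norm_num), one_div, inv_mul_cancel₀ hδ.ne', Real.rpow_one] at this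
    have h2a : ((a:ℝ) + 1) ≤ (2:ℝ)^a := by
      have := Nat.lt_two_pow_self (n := a)
      have : (a:ℝ) + 1 ≤ ((2:ℕ)^a : ℕ) := by exact_mod_cast this
      simpa using this
    calc ((a:ℝ) + 1) ≤ (2:ℝ)^a := h2a
      _ ≤ ((p:ℝ) ^ δ) ^ a := by gcongr
      _ = ((p:ℝ)^a) ^ δ := by
          rw [← Real.rpow_natCast ((p:ℝ)^δ) a, ← Real.rpow_natCast (p:ℝ) a,
            ← Real.rpow_mul (Nat.cast_nonneg p), ← Real.rpow_mul (Nat.cast_nonneg p), mul_comm]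
  -- now assemble
  have hcard := Nat.card_divisors hn0
  have hprod : ((n.divisors.card : ℕ) : ℝ) = ∏ p ∈ n.primeFactors, ((n.factorization p : ℝ) + 1) := by
    rw [hcard]; push_cast; rfl
  have hnfac : (∏ p ∈ n.primeFactors, ((p:ℝ) ^ (n.factorization p))) = (n:ℝ) := by
    have := Nat.factorization_prod_pow_eq_self hn0
    calc (∏ p ∈ n.primeFactors, ((p:ℝ) ^ (n.factorization p)))
        = ((∏ p ∈ n.primeFactors, p ^ (n.factorization p) : ℕ) : ℝ) := by push_cast; rfl
      _ = (n:ℝ) := by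
          have hNat : ∏ p ∈ n.primeFactors, p ^ n.factorization p = n := by
            rw [← Nat.support_factorization]; exact this
          exact_mod_cast hNat
  have hrpow : (n:ℝ) ^ δ = ∏ p ∈ n.primeFactors, ((p:ℝ) ^ (n.factorization p)) ^ δ := by
    rw [Real.finset_prod_rpow _ _ (fun i _ => by positivity) δ, hnfac]
  -- split into small and large primes
  rw [hprod, hrpow]
  have hsplit : ∀ p ∈ n.primeFactors,
      ((n.factorization p : ℝ) + 1) ≤ (if p < P then K else 1) * ((p:ℝ) ^ (n.factorization p)) ^ δ := by
    intro p hp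
    have hpp : p.Prime := Nat.prime_of_mem_primeFactors hp
    by_cases h : p < P
    · simpa [h] using hsmall p (n.factorization p) hpp.two_le
    · simpa [h] using hbig p (n.factorization p) hpp (le_of_not_gt h)
  calc (∏ p ∈ n.primeFactors, ((n.factorization p : ℝ) + 1))
      ≤ ∏ p ∈ n.primeFactors, (if p < P then K else 1) * ((p:ℝ) ^ (n.factorization p)) ^ δ := by
        apply Finset.prod_le_prod (fun i _ => by positivity) hsplit
    _ = (∏ p ∈ n.primeFactors, (if p < P then K else 1)) *
          ∏ p ∈ n.primeFactors, ((p:ℝ) ^ (n.factorization p)) ^ δ := by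
        rw [Finset.prod_mul_distrib]
    _ ≤ K ^ P * ∏ p ∈ n.primeFactors, ((p:ℝ) ^ (n.factorization p)) ^ δ := by
        apply mul_le_mul_of_nonneg_right _ (Finset.prod_nonneg (fun i _ => by positivity))
        calc (∏ p ∈ n.primeFactors, (if p < P then K else 1))
            = ∏ p ∈ n.primeFactors.filter (· < P), K := by
              rw [Finset.prod_filter]
          _ = K ^ (n.primeFactors.filter (· < P)).card := Finset.prod_const K
          _ ≤ K ^ P := by
              apply pow_le_pow_right₀ hK1
              have : n.primeFactors.filter (· < P) ⊆ Finset.range P := by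
                intro x hx
                simp only [Finset.mem_filter] at hx
                exact Finset.mem_range.2 hx.2
              simpa using Finset.card_le_card this


/-- Telescoping bound: `Σ_{n<N} (1+a(n+1))⁻² ≤ 1/a`. -/
lemma tele_sum (a : ℝ) (ha : 0 < a) (N : ℕ) :
    ∑ n ∈ Finset.range N, 1/(1+a*((n:ℝ)+1))^2 ≤ 1/a := by
  set g : ℕ → ℝ := fun n => 1/(1+a*(n:ℝ)) with hg
  have key : ∀ n ∈ Finset.range N, 1/(1+a*((n:ℝ)+1))^2 ≤ (1/a) * (g n - g (n+1)) := by
    intro n _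
    have hx : (0:ℝ) < 1+a*(n:ℝ) := by positivity
    have hy : (0:ℝ) < 1+a*((n:ℝ)+1) := by positivity
    have hgn : g (n+1) = 1/(1+a*((n:ℝ)+1)) := by rw [hg]; push_cast; ring_nf
    have heq : (1/a) * (g n - g (n+1)) = 1/((1+a*(n:ℝ))*(1+a*((n:ℝ)+1))) := by
      rw [hgn, hg]
      field_simp
      ring
    rw [heq]
    apply one_div_le_one_div_of_le (by positivity)
    nlinarith
  calc ∑ n ∈ Finset.range N, 1/(1+a*((n:ℝ)+1))^2
      ≤ ∑ n ∈ Finset.range N, (1/a) * (g n - g (n+1)) := Finset.sum_le_sum key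
    _ = (1/a) * (g 0 - g N) := by rw [← Finset.mul_sum, Finset.sum_range_sub' g N]
    _ ≤ 1/a := by
        have h0 : g 0 = 1 := by simp [hg]
        have hN : 0 ≤ g N := by rw [hg]; positivity
        rw [h0]
        calc (1/a) * (1 - g N) ≤ (1/a) * 1 := by
              apply mul_le_mul_of_nonneg_left (by linarith) (by positivity)
          _ = 1/a := mul_one _
/-- `Σ_{j ∈ s, j ≥ 1} (1+uj)⁻² ≤ 1/u` for any finset `s` of positive naturals. -/
lemma sum_w_le (u : ℝ) (hu : 0 < u) (s : Finset ℕ) (hs : ∀ j ∈ s, 1 ≤ j) :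
    ∑ j ∈ s, 1/(1+u*(j:ℝ))^2 ≤ 1/u := by
  set N : ℕ := s.sup id + 1 with hN
  have hsub : s ⊆ Finset.image (fun x : ℕ => x + 1) (Finset.range N) := by
    intro j hj
    have h1 : 1 ≤ j := hs j hj
    have h2 : j ≤ s.sup id := Finset.le_sup (f := id) hj
    refine Finset.mem_image.2 ⟨j - 1, Finset.mem_range.2 (by omega), by omega⟩
  calc ∑ j ∈ s, 1/(1+u*(j:ℝ))^2
      ≤ ∑ j ∈ Finset.image (fun x : ℕ => x + 1) (Finset.range N), 1/(1+u*(j:ℝ))^2 := by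
        apply Finset.sum_le_sum_of_subset_of_nonneg hsub
        intro i _ _; positivity
    _ = ∑ n ∈ Finset.range N, 1/(1+u*((n:ℝ)+1))^2 := by
        rw [Finset.sum_image (by intro x _ y _ h; simp only at h; omega)]
        apply Finset.sum_congr rfl
        intro n _; push_cast; ring_nf
    _ ≤ 1/u := tele_sum u hu N

/-- `Σ_{n ∈ s} (1+u(ρ+Bn))⁻² ≤ (1+uρ)⁻² + 1/(uB)`. -/
lemma sum_offset_le (u B ρ : ℝ) (hu : 0 < u) (hB : 0 < B) (hρ : 0 ≤ ρ) (s : Finset ℕ) :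
    ∑ n ∈ s, 1/(1+u*(ρ+B*(n:ℝ)))^2 ≤ 1/(1+u*ρ)^2 + 1/(u*B) := by
  set N : ℕ := s.sup id + 1 with hN
  have hsub : s ⊆ Finset.range N := by
    intro j hj
    have h2 : j ≤ s.sup id := Finset.le_sup (f := id) hj
    exact Finset.mem_range.2 (by omega)
  calc ∑ n ∈ s, 1/(1+u*(ρ+B*(n:ℝ)))^2
      ≤ ∑ n ∈ Finset.range N, 1/(1+u*(ρ+B*(n:ℝ)))^2 := by
        apply Finset.sum_le_sum_of_subset_of_nonneg hsub
        intro i _ _; positivity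
    _ ≤ 1/(1+u*ρ)^2 + 1/(u*B) := by
        obtain ⟨M, hM⟩ : ∃ M, N = M + 1 := ⟨s.sup id, rfl⟩
        rw [hM, Finset.sum_range_succ']
        have h0 : 1/(1+u*(ρ+B*((0:ℕ):ℝ)))^2 = 1/(1+u*ρ)^2 := by norm_num
        rw [h0]
        have hterm : ∀ n ∈ Finset.range M, 1/(1+u*(ρ+B*(((n+1:ℕ)):ℝ)))^2
            ≤ 1/(1+(u*B)*((n:ℝ)+1))^2 := by
          intro n _
          apply one_div_le_one_div_of_le (by positivity)
          have hbase : 1+(u*B)*((n:ℝ)+1) ≤ 1+u*(ρ+B*(((n+1:ℕ)):ℝ)) := by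
            push_cast
            nlinarith [mul_nonneg hu.le hρ]
          exact pow_le_pow_left₀ (by positivity) hbase 2
        have := le_trans (Finset.sum_le_sum hterm) (tele_sum (u*B) (by positivity) M)
        linarith
/-- `Σ_{d=1}^{N} 1/d² ≤ 2`. -/
lemma sum_inv_sq_le (N : ℕ) : ∑ d ∈ Finset.Icc 1 N, 1/((d:ℝ))^2 ≤ 2 := by
  have hsub : Finset.Icc 1 N ⊆ Finset.image (fun x : ℕ => x + 1) (Finset.range N) := by
    intro j hj
    simp only [Finset.mem_Icc] at hj
    exact Finset.mem_image.2 ⟨j - 1, Finset.mem_range.2 (by omega), by omega⟩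
  calc ∑ d ∈ Finset.Icc 1 N, 1/((d:ℝ))^2
      ≤ ∑ d ∈ Finset.image (fun x : ℕ => x + 1) (Finset.range N), 1/((d:ℝ))^2 := by
        apply Finset.sum_le_sum_of_subset_of_nonneg hsub
        intro i _ _; positivity
    _ = ∑ n ∈ Finset.range N, 1/(((n:ℝ))+1)^2 := by
        rw [Finset.sum_image (by intro x _ y _ h; simp only at h; omega)]
        apply Finset.sum_congr rfl
        intro n _; push_cast; ring_nf
    _ ≤ 2 := by
        rcases N with _ | M
        · simp
        rw [Finset.sum_range_succ']
        have h0 : 1/(((0:ℕ):ℝ)+1)^2 = 1 := by norm_num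
        rw [h0]
        have hterm : ∀ n ∈ Finset.range M, 1/((((n+1:ℕ)):ℝ)+1)^2 ≤ 1/(1+1*((n:ℝ)+1))^2 := by
          intro n _
          apply one_div_le_one_div_of_le (by positivity)
          push_cast; nlinarith
        have := le_trans (Finset.sum_le_sum hterm) (tele_sum 1 one_pos M)
        have h1 : (1:ℝ)/1 = 1 := by norm_num
        rw [h1] at this
        linarith

/-- `Σ_{d=1}^{N} (1+ud²)⁻² ≤ 1/(2u)`. -/
lemma sum_quad_le (u : ℝ) (hu : 0 < u) (N : ℕ) :
    ∑ d ∈ Finset.Icc 1 N, 1/(1+u*((d:ℝ))^2)^2 ≤ 1/(2*u) := by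
  have hterm : ∀ d ∈ Finset.Icc 1 N, 1/(1+u*((d:ℝ))^2)^2 ≤ (1/(4*u)) * (1/((d:ℝ))^2) := by
    intro d hd
    simp only [Finset.mem_Icc] at hd
    have hd1 : (1:ℝ) ≤ (d:ℝ) := by exact_mod_cast hd.1
    have heq : (1/(4*u)) * (1/((d:ℝ))^2) = 1/(4*u*((d:ℝ))^2) := by
      field_simp
    rw [heq]
    apply one_div_le_one_div_of_le (by positivity)
    nlinarith [sq_nonneg (1 - u*((d:ℝ))^2)]
  calc ∑ d ∈ Finset.Icc 1 N, 1/(1+u*((d:ℝ))^2)^2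
      ≤ ∑ d ∈ Finset.Icc 1 N, (1/(4*u)) * (1/((d:ℝ))^2) := Finset.sum_le_sum hterm
    _ = (1/(4*u)) * ∑ d ∈ Finset.Icc 1 N, 1/((d:ℝ))^2 := by rw [← Finset.mul_sum]
    _ ≤ (1/(4*u)) * 2 := by
        apply mul_le_mul_of_nonneg_left (sum_inv_sq_le N) (by positivity)
    _ = 1/(2*u) := by field_simp; ring


set_option maxHeartbeats 1000000 in
/-- Per-pair bound on the sum over `m`. -/
lemma pair_bound (f : ℝ → ℝ) (C₂ : ℝ) (hC₂pos : 0 < C₂)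
    (hC₂ : ∀ x : ℝ, |f x| ≤ C₂ * (1/(1+|x|)^2))
    (D T u : ℝ) (hD : 1 ≤ D) (hT : 1 < T) (hu : u = T/(8*D))
    (c d : ℕ) (hc1 : 1 ≤ c) (hcD : D ≤ c) (hc2 : (c:ℝ) ≤ 2*D) :
    Summable (fun m : ℤ => f (T * ((d:ℝ)^2/(4*(c:ℝ)) + (m:ℝ)))) ∧
    |∑' m : ℤ, f (T * ((d:ℝ)^2/(4*(c:ℝ)) + (m:ℝ)))| ≤
      C₂ * (1/(1+u*((d^2 % (4*c) : ℕ):ℝ))^2)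
      + C₂ * (1/(1+u*((4*c - d^2 % (4*c) : ℕ):ℝ))^2) + 4*C₂/T := by
  have hT0 : (0:ℝ) < T := by linarith
  have hD0 : (0:ℝ) < D := by linarith
  have hu0 : 0 < u := by rw [hu]; positivity
  have hc0 : (0:ℝ) < (c:ℝ) := by exact_mod_cast hc1
  set R : ℕ := d^2 % (4*c) with hRdef
  set S : ℕ := 4*c - R with hSdef
  set Q : ℕ := d^2 / (4*c) with hQdef
  have h4c : 0 < 4*c := by omega
  have hR4 : R < 4*c := Nat.mod_lt _ h4c
  have hdm : 4*c*Q + R = d^2 := Nat.div_add_mod (d^2) (4*c)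
  -- pointwise bound
  set z : ℤ → ℤ := fun m => (d:ℤ)^2 + 4*(c:ℤ)*m with hzdef
  have hzQ : ∀ m : ℤ, z m = 4*(c:ℤ)*((Q:ℤ) + m) + (R:ℤ) := by
    intro m
    have h2 : ((4*c*Q + R : ℕ) : ℤ) = ((d^2 : ℕ) : ℤ) := congrArg (Nat.cast : ℕ → ℤ) hdm
    push_cast at h2
    rw [hzdef]
    push_cast
    linear_combination -h2
  have hpoint : ∀ m : ℤ, |f (T * ((d:ℝ)^2/(4*(c:ℝ)) + (m:ℝ)))|
      ≤ C₂ * (1/(1+u*(((z m).natAbs : ℕ):ℝ))^2) := by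
    intro m
    have hzv : (d:ℝ)^2/(4*(c:ℝ)) + (m:ℝ) = ((z m : ℤ):ℝ)/(4*(c:ℝ)) := by
      rw [hzdef]; push_cast; field_simp
    have habs : |T * (((z m : ℤ):ℝ)/(4*(c:ℝ)))| = T * |((z m : ℤ):ℝ)| / (4*(c:ℝ)) := by
      rw [abs_mul, abs_div, abs_of_pos hT0, abs_of_pos (by positivity : (0:ℝ) < 4*(c:ℝ))]
      ring
    have hge : u * (((z m).natAbs : ℕ):ℝ) ≤ |T * ((d:ℝ)^2/(4*(c:ℝ)) + (m:ℝ))| := by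
      rw [hzv, habs]
      have hna : (((z m).natAbs : ℕ):ℝ) = |((z m : ℤ):ℝ)| := by
        push_cast [Nat.cast_natAbs]; ring_nf
      rw [hna]
      have huT : u ≤ T/(4*(c:ℝ)) := by
        rw [hu]
        apply div_le_div_of_nonneg_left hT0.le (by positivity)
        nlinarith
      calc u * |((z m : ℤ):ℝ)| ≤ (T/(4*(c:ℝ))) * |((z m : ℤ):ℝ)| :=
            mul_le_mul_of_nonneg_right huT (abs_nonneg _)
        _ = T * |((z m : ℤ):ℝ)| / (4*(c:ℝ)) := by ring
    calc |f (T * ((d:ℝ)^2/(4*(c:ℝ)) + (m:ℝ)))|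
        ≤ C₂ * (1/(1+|T * ((d:ℝ)^2/(4*(c:ℝ)) + (m:ℝ))|)^2) := hC₂ _
      _ ≤ C₂ * (1/(1+u*(((z m).natAbs : ℕ):ℝ))^2) := by
          apply mul_le_mul_of_nonneg_left _ hC₂pos.le
          apply one_div_le_one_div_of_le (by positivity)
          apply pow_le_pow_left₀ (by positivity) (by linarith) 2
  -- partial sums bound
  set Bnd : ℝ := C₂ * (1/(1+u*((R:ℕ):ℝ))^2) + C₂ * (1/(1+u*((S:ℕ):ℝ))^2) + 4*C₂/T with hBnd
  have hpartial : ∀ s : Finset ℤ, ∑ m ∈ s, |f (T * ((d:ℝ)^2/(4*(c:ℝ)) + (m:ℝ)))| ≤ Bnd := by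
    intro s
    have step1 : ∑ m ∈ s, |f (T * ((d:ℝ)^2/(4*(c:ℝ)) + (m:ℝ)))|
        ≤ C₂ * ∑ m ∈ s, 1/(1+u*(((z m).natAbs : ℕ):ℝ))^2 := by
      rw [Finset.mul_sum]
      exact Finset.sum_le_sum (fun m _ => hpoint m)
    have hsplit := Finset.sum_filter_add_sum_filter_not s (fun m => 0 ≤ (Q:ℤ) + m)
      (fun m => 1/(1+u*(((z m).natAbs : ℕ):ℝ))^2)
    -- positive part
    have hpos : ∑ m ∈ s.filter (fun m => 0 ≤ (Q:ℤ) + m), 1/(1+u*(((z m).natAbs : ℕ):ℝ))^2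
        ≤ 1/(1+u*((R:ℕ):ℝ))^2 + 1/(u*(4*(c:ℝ))) := by
      have hcongr : ∀ m ∈ s.filter (fun m => 0 ≤ (Q:ℤ) + m),
          1/(1+u*(((z m).natAbs : ℕ):ℝ))^2
          = 1/(1+u*(((R:ℕ):ℝ)+(4*(c:ℝ))*((((Q:ℤ)+m).toNat : ℕ):ℝ)))^2 := by
        intro m hm
        have hp : 0 ≤ (Q:ℤ) + m := (Finset.mem_filter.1 hm).2
        have hid : ((z m).natAbs : ℤ) = (R:ℤ) + 4*(c:ℤ)*(((Q:ℤ)+m).toNat : ℤ) := by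
          have hzge : 0 ≤ z m := by
            rw [hzQ m]
            have h1 := mul_nonneg (show (0:ℤ) ≤ 4*(c:ℤ) by positivity) hp
            have h2 : (0:ℤ) ≤ (R:ℤ) := Int.natCast_nonneg R
            linarith
          rw [Int.natAbs_of_nonneg hzge, hzQ m, Int.toNat_of_nonneg hp]
          ring
        have hidR : (((z m).natAbs : ℕ):ℝ) = ((R:ℕ):ℝ)+(4*(c:ℝ))*((((Q:ℤ)+m).toNat : ℕ):ℝ) := by
          exact_mod_cast congrArg (fun t : ℤ => (t:ℝ)) hid
        rw [hidR]
      rw [Finset.sum_congr rfl hcongr]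
      have hinj : ∀ x ∈ s.filter (fun m => 0 ≤ (Q:ℤ) + m), ∀ y ∈ s.filter (fun m => 0 ≤ (Q:ℤ) + m),
          ((Q:ℤ)+x).toNat = ((Q:ℤ)+y).toNat → x = y := by
        intro x hx y hy h
        have hpx : 0 ≤ (Q:ℤ) + x := (Finset.mem_filter.1 hx).2
        have hpy : 0 ≤ (Q:ℤ) + y := (Finset.mem_filter.1 hy).2
        omega
      have := Finset.sum_image (s := s.filter (fun m => 0 ≤ (Q:ℤ) + m))
        (g := fun m => ((Q:ℤ)+m).toNat)
        (f := fun n : ℕ => 1/(1+u*(((R:ℕ):ℝ)+(4*(c:ℝ))*(n:ℝ)))^2) hinj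
      rw [← this]
      exact sum_offset_le u (4*(c:ℝ)) ((R:ℕ):ℝ) hu0 (by positivity) (by positivity) _
    -- negative part
    have hneg : ∑ m ∈ s.filter (fun m => ¬ 0 ≤ (Q:ℤ) + m), 1/(1+u*(((z m).natAbs : ℕ):ℝ))^2
        ≤ 1/(1+u*((S:ℕ):ℝ))^2 + 1/(u*(4*(c:ℝ))) := by
      have hcongr : ∀ m ∈ s.filter (fun m => ¬ 0 ≤ (Q:ℤ) + m),
          1/(1+u*(((z m).natAbs : ℕ):ℝ))^2
          = 1/(1+u*(((S:ℕ):ℝ)+(4*(c:ℝ))*(((-((Q:ℤ)+m)-1).toNat : ℕ):ℝ)))^2 := by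
        intro m hm
        have hp : ¬ 0 ≤ (Q:ℤ) + m := (Finset.mem_filter.1 hm).2
        have hSZ : (S:ℤ) = 4*(c:ℤ) - (R:ℤ) := by
          rw [hSdef]; push_cast [Nat.cast_sub hR4.le]; ring
        have hid : ((z m).natAbs : ℤ) = (S:ℤ) + 4*(c:ℤ)*((-((Q:ℤ)+m)-1).toNat : ℤ) := by
          have hw : (Q:ℤ) + m ≤ -1 := by omega
          have hzlt : z m ≤ 0 := by
            rw [hzQ m]
            have h1 : 4*(c:ℤ)*((Q:ℤ)+m) ≤ 4*(c:ℤ)*(-1) :=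
              mul_le_mul_of_nonneg_left hw (by positivity)
            have h2 : (R:ℤ) < 4*(c:ℤ) := by exact_mod_cast hR4
            linarith
          rw [Int.ofNat_natAbs_of_nonpos hzlt, hzQ m,
            Int.toNat_of_nonneg (by linarith : (0:ℤ) ≤ -((Q:ℤ)+m)-1), hSZ]
          ring
        have hidR : (((z m).natAbs : ℕ):ℝ)
            = ((S:ℕ):ℝ)+(4*(c:ℝ))*(((-((Q:ℤ)+m)-1).toNat : ℕ):ℝ) := by
          exact_mod_cast congrArg (fun t : ℤ => (t:ℝ)) hid
        rw [hidR]
      rw [Finset.sum_congr rfl hcongr]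
      have hinj : ∀ x ∈ s.filter (fun m => ¬ 0 ≤ (Q:ℤ) + m),
          ∀ y ∈ s.filter (fun m => ¬ 0 ≤ (Q:ℤ) + m),
          (-((Q:ℤ)+x)-1).toNat = (-((Q:ℤ)+y)-1).toNat → x = y := by
        intro x hx y hy h
        have hpx : ¬ 0 ≤ (Q:ℤ) + x := (Finset.mem_filter.1 hx).2
        have hpy : ¬ 0 ≤ (Q:ℤ) + y := (Finset.mem_filter.1 hy).2
        omega
      have := Finset.sum_image (s := s.filter (fun m => ¬ 0 ≤ (Q:ℤ) + m))
        (g := fun m => (-((Q:ℤ)+m)-1).toNat)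
        (f := fun n : ℕ => 1/(1+u*(((S:ℕ):ℝ)+(4*(c:ℝ))*(n:ℝ)))^2) hinj
      rw [← this]
      exact sum_offset_le u (4*(c:ℝ)) ((S:ℕ):ℝ) hu0 (by positivity) (by positivity) _
    have htail : C₂ * (2/(u*(4*(c:ℝ)))) ≤ 4*C₂/T := by
      have h1 : T/2 ≤ u*(4*(c:ℝ)) := by
        rw [hu]
        rw [div_mul_eq_mul_div, le_div_iff₀ (by positivity)]
        nlinarith
      have h2 : 2/(u*(4*(c:ℝ))) ≤ 2/(T/2) := by
        apply div_le_div_of_nonneg_left (by norm_num) (by positivity) h1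
      have h3 : (2:ℝ)/(T/2) = 4/T := by field_simp; ring
      calc C₂ * (2/(u*(4*(c:ℝ)))) ≤ C₂ * (4/T) := by
            apply mul_le_mul_of_nonneg_left _ hC₂pos.le
            rw [← h3]; exact h2
        _ = 4*C₂/T := by ring
    calc ∑ m ∈ s, |f (T * ((d:ℝ)^2/(4*(c:ℝ)) + (m:ℝ)))|
        ≤ C₂ * ∑ m ∈ s, 1/(1+u*(((z m).natAbs : ℕ):ℝ))^2 := step1
      _ = C₂ * (∑ m ∈ s.filter (fun m => 0 ≤ (Q:ℤ) + m), 1/(1+u*(((z m).natAbs : ℕ):ℝ))^2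
            + ∑ m ∈ s.filter (fun m => ¬ 0 ≤ (Q:ℤ) + m), 1/(1+u*(((z m).natAbs : ℕ):ℝ))^2) := by
          rw [hsplit]
      _ ≤ C₂ * ((1/(1+u*((R:ℕ):ℝ))^2 + 1/(u*(4*(c:ℝ))))
            + (1/(1+u*((S:ℕ):ℝ))^2 + 1/(u*(4*(c:ℝ))))) := by
          apply mul_le_mul_of_nonneg_left (by linarith) hC₂pos.le
      _ = C₂ * (1/(1+u*((R:ℕ):ℝ))^2) + C₂ * (1/(1+u*((S:ℕ):ℝ))^2) + C₂ * (2/(u*(4*(c:ℝ)))) := by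
          ring
      _ ≤ Bnd := by rw [hBnd]; linarith
  -- summability
  have habs : Summable (fun m : ℤ => |f (T * ((d:ℝ)^2/(4*(c:ℝ)) + (m:ℝ)))|) :=
    summable_of_sum_le (fun m => abs_nonneg _) hpartial
  refine ⟨habs.of_abs, ?_⟩
  have hnorm : Summable (fun m : ℤ => ‖f (T * ((d:ℝ)^2/(4*(c:ℝ)) + (m:ℝ)))‖) := by
    simpa only [Real.norm_eq_abs] using habs
  have hle := norm_tsum_le_tsum_norm hnorm
  simp only [Real.norm_eq_abs] at hle
  exact hle.trans (Summable.tsum_le_of_sum_le habs hpartial)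

/-- The sum `S = Σ_{D ≤ c ≤ 2D, 1 ≤ d ≤ D, gcd(c,d)=1} Σ_{m∈ℤ} f(T(d²/(4c) + m))`. -/
noncomputable def keySum (f : ℝ → ℝ) (D T : ℝ) : ℝ :=
  ∑' c : ℕ, ∑' d : ℕ, ∑' m : ℤ,
    if D ≤ (c : ℝ) ∧ (c : ℝ) ≤ 2 * D ∧ 1 ≤ d ∧ (d : ℝ) ≤ D ∧ Nat.gcd c d = 1 then
      f (T * ((d : ℝ) ^ 2 / (4 * (c : ℝ)) + (m : ℝ)))
    else 0

set_option maxHeartbeats 2000000 in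
/-- If `f` is continuous and rapidly decreasing then for every `ε > 0`,
`S ≪_{ε,f} D^{2+ε}/T` for all `D ≥ 1`, `T > 1`. -/
theorem key_sum_bound_first
    (f : ℝ → ℝ) (hf : Continuous f)
    (hdecay : ∀ A : ℝ, 0 < A → ∃ C : ℝ, ∀ x : ℝ, (1 + |x|) ^ A * |f x| ≤ C)
    (ε : ℝ) (hε : 0 < ε) :
    ∃ C : ℝ, 0 < C ∧ ∀ D T : ℝ, 1 ≤ D → 1 < T →
      |keySum f D T| ≤ C * D ^ (2 + ε) / T := by
  obtain ⟨C₀, hC₀⟩ := hdecay 2 (by norm_num)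
  set C₂ : ℝ := max C₀ 1 with hC₂def
  have hC₂pos : (0:ℝ) < C₂ := lt_of_lt_of_le one_pos (le_max_right _ _)
  have hC₂ : ∀ x : ℝ, |f x| ≤ C₂ * (1/(1+|x|)^2) := by
    intro x
    have h1 : (0:ℝ) < (1+|x|)^2 := by positivity
    have h2 : (1+|x|)^(2:ℝ) = (1+|x|)^(2:ℕ) := by
      rw [← Real.rpow_natCast (1+|x|) 2]; norm_num
    have h3 := hC₀ x
    rw [h2] at h3
    rw [show C₂ * (1/(1+|x|)^2) = C₂/(1+|x|)^2 by ring, le_div_iff₀ h1]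
    calc |f x| * (1+|x|)^2 = (1+|x|)^(2:ℕ) * |f x| := by ring
      _ ≤ C₀ := h3
      _ ≤ C₂ := le_max_left _ _
  obtain ⟨Cτ, hCτ1, hCτ⟩ := tau_le_rpow (ε/2) (by positivity)
  have hCτ0 : (0:ℝ) < Cτ := lt_of_lt_of_le one_pos hCτ1
  have h9pos : (0:ℝ) < (9:ℝ)^(ε/2) := Real.rpow_pos_of_pos (by norm_num) _
  have h9ge1 : (1:ℝ) ≤ (9:ℝ)^(ε/2) := Real.one_le_rpow (by norm_num) (by positivity)
  refine ⟨32*C₂*Cτ*(9:ℝ)^(ε/2), by positivity, ?_⟩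
  intro D T hD hT
  have hT0 : (0:ℝ) < T := lt_trans one_pos hT
  have hD0 : (0:ℝ) < D := lt_of_lt_of_le one_pos hD
  set u : ℝ := T/(8*D) with hu
  have hu0 : 0 < u := by positivity
  have h1u : 1/u = 8*D/T := by rw [hu]; field_simp
  set Fc : Finset ℕ := Finset.Icc ⌈D⌉₊ ⌊2*D⌋₊ with hFc
  set Fd : Finset ℕ := Finset.Icc 1 ⌊D⌋₊ with hFd
  have hceil1 : 1 ≤ ⌈D⌉₊ := Nat.one_le_ceil_iff.2 hD0
  have hcardFc : (Fc.card : ℝ) ≤ 2*D := by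
    rw [hFc, Nat.card_Icc]
    have h1 : ⌊2*D⌋₊ + 1 - ⌈D⌉₊ ≤ ⌊2*D⌋₊ := by omega
    calc ((⌊2*D⌋₊ + 1 - ⌈D⌉₊ : ℕ) : ℝ) ≤ (⌊2*D⌋₊ : ℝ) := by exact_mod_cast h1
      _ ≤ 2*D := Nat.floor_le (by positivity)
  have hcardFd : (Fd.card : ℝ) ≤ D := by
    rw [hFd, Nat.card_Icc]
    calc ((⌊D⌋₊ + 1 - 1 : ℕ) : ℝ) = (⌊D⌋₊ : ℝ) := by norm_num
      _ ≤ D := Nat.floor_le hD0.le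
  -- membership facts
  have hFcmem : ∀ c : ℕ, c ∈ Fc → 1 ≤ c ∧ (c:ℝ) ≤ 2*D := by
    intro c hc
    rw [hFc, Finset.mem_Icc] at hc
    constructor
    · omega
    · calc (c:ℝ) ≤ (⌊2*D⌋₊ : ℝ) := by exact_mod_cast hc.2
        _ ≤ 2*D := Nat.floor_le (by positivity)
  have hFdmem : ∀ d : ℕ, d ∈ Fd → 1 ≤ d ∧ (d:ℝ) ≤ D := by
    intro d hd
    rw [hFd, Finset.mem_Icc] at hd
    refine ⟨hd.1, ?_⟩
    calc (d:ℝ) ≤ (⌊D⌋₊ : ℝ) := by exact_mod_cast hd.2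
      _ ≤ D := Nat.floor_le hD0.le
  -- Step 1 : reduce to a finite double sum
  have hstep1 : keySum f D T = ∑ c ∈ Fc, ∑ d ∈ Fd,
      (if D ≤ (c : ℝ) ∧ (c : ℝ) ≤ 2 * D ∧ 1 ≤ d ∧ (d : ℝ) ≤ D ∧ Nat.gcd c d = 1 then
        (∑' m : ℤ, f (T * ((d : ℝ) ^ 2 / (4 * (c : ℝ)) + (m : ℝ)))) else 0) := by
    rw [keySum]
    have hinner : ∀ c d : ℕ,
        (∑' m : ℤ, if D ≤ (c : ℝ) ∧ (c : ℝ) ≤ 2 * D ∧ 1 ≤ d ∧ (d : ℝ) ≤ D ∧ Nat.gcd c d = 1 then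
          f (T * ((d : ℝ) ^ 2 / (4 * (c : ℝ)) + (m : ℝ))) else 0)
        = (if D ≤ (c : ℝ) ∧ (c : ℝ) ≤ 2 * D ∧ 1 ≤ d ∧ (d : ℝ) ≤ D ∧ Nat.gcd c d = 1 then
          (∑' m : ℤ, f (T * ((d : ℝ) ^ 2 / (4 * (c : ℝ)) + (m : ℝ)))) else 0) := by
      intro c d
      by_cases h : D ≤ (c : ℝ) ∧ (c : ℝ) ≤ 2 * D ∧ 1 ≤ d ∧ (d : ℝ) ≤ D ∧ Nat.gcd c d = 1
      · simp only [if_pos h]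
      · simp only [if_neg h, tsum_zero]
    have hd0 : ∀ c : ℕ, (∑' d : ℕ, ∑' m : ℤ,
        if D ≤ (c : ℝ) ∧ (c : ℝ) ≤ 2 * D ∧ 1 ≤ d ∧ (d : ℝ) ≤ D ∧ Nat.gcd c d = 1 then
          f (T * ((d : ℝ) ^ 2 / (4 * (c : ℝ)) + (m : ℝ))) else 0)
        = ∑ d ∈ Fd, (if D ≤ (c : ℝ) ∧ (c : ℝ) ≤ 2 * D ∧ 1 ≤ d ∧ (d : ℝ) ≤ D ∧ Nat.gcd c d = 1 then
          (∑' m : ℤ, f (T * ((d : ℝ) ^ 2 / (4 * (c : ℝ)) + (m : ℝ)))) else 0) := by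
      intro c
      rw [tsum_congr (hinner c)]
      apply tsum_eq_sum
      intro d hd
      rw [if_neg]
      intro hcond
      exact hd (by rw [hFd, Finset.mem_Icc]; exact ⟨hcond.2.2.1, Nat.le_floor hcond.2.2.2.1⟩)
    rw [tsum_congr hd0]
    apply tsum_eq_sum
    intro c hc
    apply Finset.sum_eq_zero
    intro d _
    rw [if_neg]
    intro hcond
    exact hc (by rw [hFc, Finset.mem_Icc]; exact ⟨Nat.ceil_le.2 hcond.1, Nat.le_floor hcond.2.1⟩)
  -- Step 2 : bound by three pieces
  have hstep2 : |keySum f D T| ≤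
      (∑ c ∈ Fc, ∑ d ∈ Fd,
        (if D ≤ (c : ℝ) ∧ (c : ℝ) ≤ 2 * D ∧ 1 ≤ d ∧ (d : ℝ) ≤ D ∧ Nat.gcd c d = 1 then
          C₂ * (1/(1+u*((d^2 % (4*c) : ℕ):ℝ))^2) else 0))
      + (∑ c ∈ Fc, ∑ d ∈ Fd,
        (if D ≤ (c : ℝ) ∧ (c : ℝ) ≤ 2 * D ∧ 1 ≤ d ∧ (d : ℝ) ≤ D ∧ Nat.gcd c d = 1 then
          C₂ * (1/(1+u*((4*c - d^2 % (4*c) : ℕ):ℝ))^2) else 0))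
      + (∑ c ∈ Fc, ∑ d ∈ Fd,
        (if D ≤ (c : ℝ) ∧ (c : ℝ) ≤ 2 * D ∧ 1 ≤ d ∧ (d : ℝ) ≤ D ∧ Nat.gcd c d = 1 then
          4*C₂/T else 0)) := by
    rw [hstep1]
    calc |∑ c ∈ Fc, ∑ d ∈ Fd, _| ≤ ∑ c ∈ Fc, |∑ d ∈ Fd, _| := Finset.abs_sum_le_sum_abs _ _
      _ ≤ ∑ c ∈ Fc, ∑ d ∈ Fd,
          ((if D ≤ (c : ℝ) ∧ (c : ℝ) ≤ 2 * D ∧ 1 ≤ d ∧ (d : ℝ) ≤ D ∧ Nat.gcd c d = 1 then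
            C₂ * (1/(1+u*((d^2 % (4*c) : ℕ):ℝ))^2) else 0)
          + (if D ≤ (c : ℝ) ∧ (c : ℝ) ≤ 2 * D ∧ 1 ≤ d ∧ (d : ℝ) ≤ D ∧ Nat.gcd c d = 1 then
            C₂ * (1/(1+u*((4*c - d^2 % (4*c) : ℕ):ℝ))^2) else 0)
          + (if D ≤ (c : ℝ) ∧ (c : ℝ) ≤ 2 * D ∧ 1 ≤ d ∧ (d : ℝ) ≤ D ∧ Nat.gcd c d = 1 then
            4*C₂/T else 0)) := by
          apply Finset.sum_le_sum
          intro c _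
          refine le_trans (Finset.abs_sum_le_sum_abs _ _) (Finset.sum_le_sum ?_)
          intro d _
          by_cases h : D ≤ (c : ℝ) ∧ (c : ℝ) ≤ 2 * D ∧ 1 ≤ d ∧ (d : ℝ) ≤ D ∧ Nat.gcd c d = 1
          · rw [if_pos h, if_pos h, if_pos h, if_pos h]
            have hc1 : 1 ≤ c := by
              have : (1:ℝ) ≤ (c:ℝ) := le_trans hD h.1
              exact_mod_cast this
            exact (pair_bound f C₂ hC₂pos hC₂ D T u hD hT hu c d hc1 h.1 h.2.1).2
          · rw [if_neg h, if_neg h, if_neg h, if_neg h]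
            simp
      _ = _ := by
          simp only [← Finset.sum_add_distrib]
  -- the constant K
  set K : ℝ := Cτ*(9:ℝ)^(ε/2)*D^ε with hKdef
  have hDε1 : (1:ℝ) ≤ D^ε := Real.one_le_rpow hD hε.le
  have hK1 : (1:ℝ) ≤ K := by
    rw [hKdef]
    calc (1:ℝ) = 1*1*1 := by norm_num
      _ ≤ Cτ*(9:ℝ)^(ε/2)*D^ε := by gcongr
  have hKbound : ∀ n : ℕ, 1 ≤ n → (n:ℝ) ≤ 9*D^2 → (n.divisors.card : ℝ) ≤ K := by
    intro n hn1 hn9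
    have hDsq : ((D^2 : ℝ))^(ε/2) = D^ε := by
      rw [← Real.rpow_natCast D 2, ← Real.rpow_mul hD0.le]
      congr 1
      push_cast; ring
    calc (n.divisors.card : ℝ) ≤ Cτ * (n:ℝ)^(ε/2) := hCτ n hn1
      _ ≤ Cτ * ((9*D^2 : ℝ))^(ε/2) := by
          apply mul_le_mul_of_nonneg_left _ hCτ0.le
          exact Real.rpow_le_rpow (Nat.cast_nonneg n) hn9 (by positivity)
      _ = K := by
          rw [Real.mul_rpow (by norm_num) (by positivity), hDsq, hKdef, mul_assoc]
  -- P3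
  have hP3 : (∑ c ∈ Fc, ∑ d ∈ Fd,
      (if D ≤ (c : ℝ) ∧ (c : ℝ) ≤ 2 * D ∧ 1 ≤ d ∧ (d : ℝ) ≤ D ∧ Nat.gcd c d = 1 then
        4*C₂/T else 0)) ≤ 2*D*(D*(4*C₂/T)) := by
    have hin : ∀ c ∈ Fc, (∑ d ∈ Fd,
        (if D ≤ (c : ℝ) ∧ (c : ℝ) ≤ 2 * D ∧ 1 ≤ d ∧ (d : ℝ) ≤ D ∧ Nat.gcd c d = 1 then
          4*C₂/T else 0)) ≤ D*(4*C₂/T) := by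
      intro c _
      calc (∑ d ∈ Fd, _) ≤ Fd.card • (4*C₂/T) := by
            apply Finset.sum_le_card_nsmul
            intro d _
            by_cases h : D ≤ (c : ℝ) ∧ (c : ℝ) ≤ 2 * D ∧ 1 ≤ d ∧ (d : ℝ) ≤ D ∧ Nat.gcd c d = 1
            · rw [if_pos h]
            · rw [if_neg h]; positivity
        _ = (Fd.card : ℝ) * (4*C₂/T) := by rw [nsmul_eq_mul]
        _ ≤ D*(4*C₂/T) := by
            apply mul_le_mul_of_nonneg_right hcardFd (by positivity)
    calc (∑ c ∈ Fc, ∑ d ∈ Fd, _) ≤ Fc.card • (D*(4*C₂/T)) :=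
          Finset.sum_le_card_nsmul _ _ _ hin
      _ = (Fc.card : ℝ) * (D*(4*C₂/T)) := by rw [nsmul_eq_mul]
      _ ≤ 2*D*(D*(4*C₂/T)) := by
          apply mul_le_mul_of_nonneg_right hcardFc (by positivity)
  -- P1 : the `R`-part
  have hP1 : (∑ c ∈ Fc, ∑ d ∈ Fd,
      (if D ≤ (c : ℝ) ∧ (c : ℝ) ≤ 2 * D ∧ 1 ≤ d ∧ (d : ℝ) ≤ D ∧ Nat.gcd c d = 1 then
        C₂ * (1/(1+u*((d^2 % (4*c) : ℕ):ℝ))^2) else 0))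
      ≤ 2*D*C₂*(1/(2*u)) + D*(K*(C₂*(1/u))) := by
    rw [Finset.sum_comm]
    have hper : ∀ d ∈ Fd, (∑ c ∈ Fc,
        (if D ≤ (c : ℝ) ∧ (c : ℝ) ≤ 2 * D ∧ 1 ≤ d ∧ (d : ℝ) ≤ D ∧ Nat.gcd c d = 1 then
          C₂ * (1/(1+u*((d^2 % (4*c) : ℕ):ℝ))^2) else 0))
        ≤ 2*D*(C₂*(1/(1+u*((d:ℝ))^2)^2)) + K*(C₂*(1/u)) := by
      intro d hd
      obtain ⟨hd1, hdD⟩ := hFdmem d hd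
      rw [← Finset.sum_filter_add_sum_filter_not Fc (fun c => d^2 < 4*c)]
      have hparta : (∑ c ∈ Fc.filter (fun c => d^2 < 4*c),
          (if D ≤ (c : ℝ) ∧ (c : ℝ) ≤ 2 * D ∧ 1 ≤ d ∧ (d : ℝ) ≤ D ∧ Nat.gcd c d = 1 then
            C₂ * (1/(1+u*((d^2 % (4*c) : ℕ):ℝ))^2) else 0))
          ≤ 2*D*(C₂*(1/(1+u*((d:ℝ))^2)^2)) := by
        calc _ ≤ (Fc.filter (fun c => d^2 < 4*c)).card • (C₂*(1/(1+u*((d:ℝ))^2)^2)) := by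
              apply Finset.sum_le_card_nsmul
              intro c hc
              have hlt : d^2 < 4*c := (Finset.mem_filter.1 hc).2
              by_cases h : D ≤ (c : ℝ) ∧ (c : ℝ) ≤ 2 * D ∧ 1 ≤ d ∧ (d : ℝ) ≤ D ∧ Nat.gcd c d = 1
              · rw [if_pos h, Nat.mod_eq_of_lt hlt]
                have hcast : ((d^2 : ℕ):ℝ) = (d:ℝ)^2 := by push_cast; ring
                rw [hcast]
              · rw [if_neg h]; positivity
          _ = ((Fc.filter (fun c => d^2 < 4*c)).card : ℝ) * (C₂*(1/(1+u*((d:ℝ))^2)^2)) := by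
              rw [nsmul_eq_mul]
          _ ≤ 2*D*(C₂*(1/(1+u*((d:ℝ))^2)^2)) := by
              apply mul_le_mul_of_nonneg_right _ (by positivity)
              calc ((Fc.filter (fun c => d^2 < 4*c)).card : ℝ) ≤ (Fc.card : ℝ) := by
                    exact_mod_cast Finset.card_filter_le _ _
                _ ≤ 2*D := hcardFc
      have hpartb : (∑ c ∈ Fc.filter (fun c => ¬ d^2 < 4*c),
          (if D ≤ (c : ℝ) ∧ (c : ℝ) ≤ 2 * D ∧ 1 ≤ d ∧ (d : ℝ) ≤ D ∧ Nat.gcd c d = 1 then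
            C₂ * (1/(1+u*((d^2 % (4*c) : ℕ):ℝ))^2) else 0))
          ≤ K*(C₂*(1/u)) := by
        rw [← Finset.sum_filter (fun c : ℕ => D ≤ (c : ℝ) ∧ (c : ℝ) ≤ 2 * D ∧ 1 ≤ d ∧ (d : ℝ) ≤ D ∧ Nat.gcd c d = 1)
          (fun c : ℕ => C₂ * (1/(1+u*((d^2 % (4*c) : ℕ):ℝ))^2))]
        set A2 := (Fc.filter (fun c => ¬ d^2 < 4*c)).filter
          (fun c : ℕ => D ≤ (c : ℝ) ∧ (c : ℝ) ≤ 2 * D ∧ 1 ≤ d ∧ (d : ℝ) ≤ D ∧ Nat.gcd c d = 1) with hA2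
        have hA2mem : ∀ c ∈ A2, (c ∈ Fc ∧ 4*c ≤ d^2) ∧ Nat.gcd c d = 1 ∧ D ≤ (c:ℝ) := by
          intro c hc
          rw [hA2, Finset.mem_filter, Finset.mem_filter] at hc
          refine ⟨⟨hc.1.1, by omega⟩, hc.2.2.2.2.2, hc.2.1⟩
        have hR1 : ∀ c ∈ A2, 1 ≤ d^2 % (4*c) := by
          intro c hc
          obtain ⟨⟨hcFc, h4c⟩, hgcd, hDc⟩ := hA2mem c hc
          have hc1 : 1 ≤ c := (hFcmem c hcFc).1
          by_contra h0
          have h00 : d^2 % (4*c) = 0 := by omega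
          have hdvd : c ∣ d^2 := dvd_trans (dvd_mul_left c 4) (Nat.dvd_of_mod_eq_zero h00)
          have hcop : Nat.Coprime c (d^2) := Nat.Coprime.pow_right 2 hgcd
          have hdg : c ∣ Nat.gcd c (d^2) := Nat.dvd_gcd dvd_rfl hdvd
          rw [Nat.Coprime] at hcop
          rw [hcop] at hdg
          have hceq : c = 1 := Nat.dvd_one.1 hdg
          have hD1 : D ≤ 1 := by
            rw [hceq] at hDc; push_cast at hDc; linarith
          have hdle : (d:ℝ) ≤ 1 := le_trans hdD hD1
          have hdle' : d ≤ 1 := by exact_mod_cast hdle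
          have hdeq : d = 1 := by omega
          rw [hdeq, hceq] at h4c
          omega
        have hmaps : ∀ c ∈ A2, d^2 % (4*c) ∈ Finset.Icc 1 (d^2) := by
          intro c hc
          exact Finset.mem_Icc.2 ⟨hR1 c hc, Nat.mod_le _ _⟩
        rw [← Finset.sum_fiberwise_of_maps_to hmaps
          (fun c => C₂ * (1/(1+u*((d^2 % (4*c) : ℕ):ℝ))^2))]
        have hKC₂ : (0:ℝ) ≤ K * C₂ := mul_nonneg (le_trans zero_le_one hK1) hC₂pos.le
        have hperj : ∀ j ∈ Finset.Icc 1 (d^2),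
            (∑ c ∈ A2.filter (fun c => d^2 % (4*c) = j),
              C₂ * (1/(1+u*((d^2 % (4*c) : ℕ):ℝ))^2))
            ≤ K * (C₂ * (1/(1+u*(j:ℝ))^2)) := by
          intro j hj
          obtain ⟨hj1, hjd⟩ := Finset.mem_Icc.1 hj
          have hfib : ∀ c ∈ A2.filter (fun c => d^2 % (4*c) = j),
              C₂ * (1/(1+u*((d^2 % (4*c) : ℕ):ℝ))^2) = C₂ * (1/(1+u*(j:ℝ))^2) := by
            intro c hc
            have : d^2 % (4*c) = j := (Finset.mem_filter.1 hc).2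
            rw [this]
          rw [Finset.sum_congr rfl hfib, Finset.sum_const, nsmul_eq_mul]
          apply mul_le_mul_of_nonneg_right _ (by positivity)
          by_cases hne : (A2.filter (fun c => d^2 % (4*c) = j)).Nonempty
          · have hcard : (A2.filter (fun c => d^2 % (4*c) = j)).card ≤ (d^2 - j).divisors.card := by
              apply Finset.card_le_card_of_injOn (fun c => 4*c)
              · intro c hc
                have hcf := Finset.mem_filter.1 hc
                have hgj : d^2 % (4*c) = j := hcf.2
                obtain ⟨⟨hcFc, h4c⟩, _, _⟩ := hA2mem c hcf.1
                have hc1 : 1 ≤ c := (hFcmem c hcFc).1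
                have hdm := Nat.div_add_mod (d^2) (4*c)
                have hmlt : d^2 % (4*c) < 4*c := Nat.mod_lt _ (by omega)
                refine Nat.mem_divisors.2 ⟨⟨d^2/(4*c), by beta_reduce; omega⟩, by omega⟩
              · intro x _ y _ hxy
                simp only at hxy
                omega
            obtain ⟨c₀, hc₀⟩ := hne
            have hc₀f := Finset.mem_filter.1 hc₀
            have hgj₀ : d^2 % (4*c₀) = j := hc₀f.2
            obtain ⟨⟨hc₀Fc, h4c₀⟩, _, _⟩ := hA2mem c₀ hc₀f.1
            have hc₀1 : 1 ≤ c₀ := (hFcmem c₀ hc₀Fc).1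
            have hjlt : j < d^2 := by
              have := Nat.mod_lt (d^2) (show 0 < 4*c₀ by omega)
              omega
            calc ((A2.filter (fun c => d^2 % (4*c) = j)).card : ℝ)
                ≤ ((d^2 - j).divisors.card : ℝ) := by exact_mod_cast hcard
              _ ≤ K := by
                  refine hKbound (d^2 - j) (by omega) ?_
                  calc ((d^2 - j : ℕ):ℝ) ≤ ((d^2 : ℕ):ℝ) := by
                        exact_mod_cast Nat.sub_le _ _
                    _ = (d:ℝ)^2 := by push_cast; ring
                    _ ≤ 9*D^2 := by nlinarith [(show (0:ℝ) ≤ (d:ℝ) from Nat.cast_nonneg d)]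
          · rw [Finset.not_nonempty_iff_eq_empty] at hne
            rw [hne]
            simp only [Finset.card_empty, Nat.cast_zero]
            linarith
        calc (∑ j ∈ Finset.Icc 1 (d^2), ∑ c ∈ A2.filter (fun c => d^2 % (4*c) = j),
              C₂ * (1/(1+u*((d^2 % (4*c) : ℕ):ℝ))^2))
            ≤ ∑ j ∈ Finset.Icc 1 (d^2), K * (C₂ * (1/(1+u*(j:ℝ))^2)) := Finset.sum_le_sum hperj
          _ = K*C₂*(∑ j ∈ Finset.Icc 1 (d^2), 1/(1+u*(j:ℝ))^2) := by
              rw [Finset.mul_sum]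
              apply Finset.sum_congr rfl
              intro j _; ring
          _ ≤ K*C₂*(1/u) := by
              apply mul_le_mul_of_nonneg_left _ hKC₂
              exact sum_w_le u hu0 _ (fun j hj => (Finset.mem_Icc.1 hj).1)
          _ = K*(C₂*(1/u)) := by ring
      linarith
    calc (∑ d ∈ Fd, ∑ c ∈ Fc, _)
        ≤ ∑ d ∈ Fd, (2*D*(C₂*(1/(1+u*((d:ℝ))^2)^2)) + K*(C₂*(1/u))) := Finset.sum_le_sum hper
      _ = 2*D*C₂*(∑ d ∈ Fd, 1/(1+u*((d:ℝ))^2)^2) + ∑ d ∈ Fd, K*(C₂*(1/u)) := by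
          rw [Finset.sum_add_distrib, Finset.mul_sum]
          congr 1
          apply Finset.sum_congr rfl
          intro d _; ring
      _ ≤ 2*D*C₂*(1/(2*u)) + D*(K*(C₂*(1/u))) := by
          have h1 : (∑ d ∈ Fd, 1/(1+u*((d:ℝ))^2)^2) ≤ 1/(2*u) := by
            rw [hFd]; exact sum_quad_le u hu0 ⌊D⌋₊
          have h2 : (∑ d ∈ Fd, K*(C₂*(1/u))) ≤ D*(K*(C₂*(1/u))) := by
            calc (∑ d ∈ Fd, K*(C₂*(1/u))) = (Fd.card : ℝ) * (K*(C₂*(1/u))) := by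
                  rw [Finset.sum_const, nsmul_eq_mul]
              _ ≤ D*(K*(C₂*(1/u))) := by
                  apply mul_le_mul_of_nonneg_right hcardFd (by positivity)
          have h3 : (0:ℝ) ≤ 2*D*C₂ := by positivity
          nlinarith [mul_le_mul_of_nonneg_left h1 h3]
  -- P2 : the `S`-part
  have hKC₂' : (0:ℝ) ≤ K * C₂ := mul_nonneg (le_trans zero_le_one hK1) hC₂pos.le
  have hKCu : (0:ℝ) ≤ K*(C₂*(1/u)) := by
    apply mul_nonneg (le_trans zero_le_one hK1)
    positivity
  have hP2 : (∑ c ∈ Fc, ∑ d ∈ Fd,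
      (if D ≤ (c : ℝ) ∧ (c : ℝ) ≤ 2 * D ∧ 1 ≤ d ∧ (d : ℝ) ≤ D ∧ Nat.gcd c d = 1 then
        C₂ * (1/(1+u*((4*c - d^2 % (4*c) : ℕ):ℝ))^2) else 0))
      ≤ D*(K*(C₂*(1/u))) := by
    rw [Finset.sum_comm]
    have hper : ∀ d ∈ Fd, (∑ c ∈ Fc,
        (if D ≤ (c : ℝ) ∧ (c : ℝ) ≤ 2 * D ∧ 1 ≤ d ∧ (d : ℝ) ≤ D ∧ Nat.gcd c d = 1 then
          C₂ * (1/(1+u*((4*c - d^2 % (4*c) : ℕ):ℝ))^2) else 0))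
        ≤ K*(C₂*(1/u)) := by
      intro d hd
      obtain ⟨hd1, hdD⟩ := hFdmem d hd
      have hdrop : (∑ c ∈ Fc,
          (if D ≤ (c : ℝ) ∧ (c : ℝ) ≤ 2 * D ∧ 1 ≤ d ∧ (d : ℝ) ≤ D ∧ Nat.gcd c d = 1 then
            C₂ * (1/(1+u*((4*c - d^2 % (4*c) : ℕ):ℝ))^2) else 0))
          ≤ ∑ c ∈ Fc, C₂ * (1/(1+u*((4*c - d^2 % (4*c) : ℕ):ℝ))^2) := by
        apply Finset.sum_le_sum
        intro c _
        by_cases h : D ≤ (c : ℝ) ∧ (c : ℝ) ≤ 2 * D ∧ 1 ≤ d ∧ (d : ℝ) ≤ D ∧ Nat.gcd c d = 1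
        · rw [if_pos h]
        · rw [if_neg h]; positivity
      apply le_trans hdrop
      have hmaps : ∀ c ∈ Fc, 4*c - d^2 % (4*c) ∈ Finset.Icc 1 (4*⌊2*D⌋₊) := by
        intro c hc
        have hc1 : 1 ≤ c := (hFcmem c hc).1
        have hcle : c ≤ ⌊2*D⌋₊ := by
          rw [hFc, Finset.mem_Icc] at hc
          exact hc.2
        have hmod : d^2 % (4*c) < 4*c := Nat.mod_lt _ (by omega)
        exact Finset.mem_Icc.2 ⟨by omega, by omega⟩
      rw [← Finset.sum_fiberwise_of_maps_to hmaps
        (fun c => C₂ * (1/(1+u*((4*c - d^2 % (4*c) : ℕ):ℝ))^2))]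
      have hperj : ∀ j ∈ Finset.Icc 1 (4*⌊2*D⌋₊),
          (∑ c ∈ Fc.filter (fun c => 4*c - d^2 % (4*c) = j),
            C₂ * (1/(1+u*((4*c - d^2 % (4*c) : ℕ):ℝ))^2))
          ≤ K * (C₂ * (1/(1+u*(j:ℝ))^2)) := by
        intro j hj
        obtain ⟨hj1, hjle⟩ := Finset.mem_Icc.1 hj
        have hfib : ∀ c ∈ Fc.filter (fun c => 4*c - d^2 % (4*c) = j),
            C₂ * (1/(1+u*((4*c - d^2 % (4*c) : ℕ):ℝ))^2) = C₂ * (1/(1+u*(j:ℝ))^2) := by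
          intro c hc
          have : 4*c - d^2 % (4*c) = j := (Finset.mem_filter.1 hc).2
          rw [this]
        rw [Finset.sum_congr rfl hfib, Finset.sum_const, nsmul_eq_mul]
        apply mul_le_mul_of_nonneg_right _ (by positivity)
        have hcard : (Fc.filter (fun c => 4*c - d^2 % (4*c) = j)).card
            ≤ (d^2 + j).divisors.card := by
          apply Finset.card_le_card_of_injOn (fun c => 4*c)
          · intro c hc
            have hcf := Finset.mem_filter.1 hc
            have hgj : 4*c - d^2 % (4*c) = j := hcf.2
            have hc1 : 1 ≤ c := (hFcmem c hcf.1).1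
            have hdm := Nat.div_add_mod (d^2) (4*c)
            have hmlt : d^2 % (4*c) < 4*c := Nat.mod_lt _ (by omega)
            have e1 : 4*c*(d^2/(4*c)+1) = 4*c*(d^2/(4*c)) + 4*c := by ring
            refine Nat.mem_divisors.2 ⟨⟨d^2/(4*c)+1, by beta_reduce; omega⟩, by omega⟩
          · intro x _ y _ hxy
            simp only at hxy
            omega
        calc ((Fc.filter (fun c => 4*c - d^2 % (4*c) = j)).card : ℝ)
            ≤ ((d^2 + j).divisors.card : ℝ) := by exact_mod_cast hcard
          _ ≤ K := by
              refine hKbound (d^2 + j) (by omega) ?_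
              have hjR : (j:ℝ) ≤ 8*D := by
                calc (j:ℝ) ≤ ((4*⌊2*D⌋₊ : ℕ):ℝ) := by exact_mod_cast hjle
                  _ = 4*((⌊2*D⌋₊ : ℕ):ℝ) := by push_cast; ring
                  _ ≤ 4*(2*D) := by
                      apply mul_le_mul_of_nonneg_left (Nat.floor_le (by positivity)) (by norm_num)
                  _ = 8*D := by ring
              calc ((d^2 + j : ℕ):ℝ) = (d:ℝ)^2 + (j:ℝ) := by push_cast; ring
                _ ≤ D^2 + 8*D := by
                    have : (d:ℝ)^2 ≤ D^2 := by
                      nlinarith [(show (0:ℝ) ≤ (d:ℝ) from Nat.cast_nonneg d)]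
                    linarith
                _ ≤ 9*D^2 := by nlinarith
      calc (∑ j ∈ Finset.Icc 1 (4*⌊2*D⌋₊), ∑ c ∈ Fc.filter (fun c => 4*c - d^2 % (4*c) = j),
            C₂ * (1/(1+u*((4*c - d^2 % (4*c) : ℕ):ℝ))^2))
          ≤ ∑ j ∈ Finset.Icc 1 (4*⌊2*D⌋₊), K * (C₂ * (1/(1+u*(j:ℝ))^2)) :=
            Finset.sum_le_sum hperj
        _ = K*C₂*(∑ j ∈ Finset.Icc 1 (4*⌊2*D⌋₊), 1/(1+u*(j:ℝ))^2) := by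
            rw [Finset.mul_sum]
            apply Finset.sum_congr rfl
            intro j _; ring
        _ ≤ K*C₂*(1/u) := by
            apply mul_le_mul_of_nonneg_left _ hKC₂'
            exact sum_w_le u hu0 _ (fun j hj => (Finset.mem_Icc.1 hj).1)
        _ = K*(C₂*(1/u)) := by ring
    calc (∑ d ∈ Fd, ∑ c ∈ Fc, _) ≤ Fd.card • (K*(C₂*(1/u))) :=
          Finset.sum_le_card_nsmul _ _ _ hper
      _ = (Fd.card : ℝ) * (K*(C₂*(1/u))) := by rw [nsmul_eq_mul]
      _ ≤ D*(K*(C₂*(1/u))) := mul_le_mul_of_nonneg_right hcardFd hKCu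
  -- final combination
  have htot : |keySum f D T| ≤
      (2*D*C₂*(1/(2*u)) + D*(K*(C₂*(1/u)))) + D*(K*(C₂*(1/u))) + 2*D*(D*(4*C₂/T)) :=
    le_trans hstep2 (add_le_add (add_le_add hP1 hP2) hP3)
  have heq : (2*D*C₂*(1/(2*u)) + D*(K*(C₂*(1/u)))) + D*(K*(C₂*(1/u))) + 2*D*(D*(4*C₂/T))
      = (16*C₂*D^2 + 16*C₂*K*D^2)/T := by
    rw [hu]
    field_simp
    ring
  have hD2 : D^(2+ε) = D^2 * D^ε := by
    rw [Real.rpow_add hD0, Real.rpow_two]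
  have hKK : (1:ℝ) ≤ Cτ*(9:ℝ)^(ε/2)*D^ε := by rw [← hKdef]; exact hK1
  have hnum : 16*C₂*D^2 + 16*C₂*K*D^2 ≤ 32*C₂*Cτ*(9:ℝ)^(ε/2) * D^(2+ε) := by
    rw [hD2, hKdef]
    have h2 : 16*C₂*D^2 ≤ 16*C₂*D^2*(Cτ*(9:ℝ)^(ε/2)*D^ε) := by
      apply le_mul_of_one_le_right _ hKK
      have := sq_nonneg D
      nlinarith [hC₂pos]
    nlinarith [h2]
  calc |keySum f D T| ≤ (16*C₂*D^2 + 16*C₂*K*D^2)/T := by rw [← heq]; exact htot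
    _ ≤ 32*C₂*Cτ*(9:ℝ)^(ε/2) * D^(2+ε)/T := by
        gcongr
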